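/- arXiv:2002.04725 — 2 statements merged into one kernel-verified Lean document; each statement's English description precedes it below -/
import Mathlib

section
/- For every δ ≥ 1, the function x ↦ φ(x; δ) = 2Φ(x) − Φ(x(1+δ)) − Φ(x(1−δ)) is strictly increasing on (0, ∞). -/
open Real MeasureTheory ProbabilityTheory Filter Topology

/-- The CDF of the standard normal distribution. -/
noncomputable def stdNormalCDF (x : ℝ) : ℝ := cdf (gaussianReal 0 1) x

/-- `phi δ x = 2Φ(x) − Φ(x(1+δ)) − Φ(x(1−δ))`. -/
noncomputable def phi (δ x : ℝ) : ℝ :=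
  2 * stdNormalCDF x - stdNormalCDF (x * (1 + δ)) - stdNormalCDF (x * (1 - δ))

/-!
The standard normal CDF has the Gaussian density `g` as derivative, so
`φ'(x) = 2 g(x) - (1 + δ) g((1 + δ) x) + (δ - 1) g((δ - 1) x)`. Since `g` decreases in `|x|`
and `0 ≤ (δ - 1) x ≤ (1 + δ) x`, the last term is at least `(δ - 1) g((1 + δ) x)`, leaving
`φ'(x) ≥ 2 (g(x) - g((1 + δ) x)) > 0` for `x > 0`.
-/

open scoped NNReal

namespace ProbabilityTheory

lemma continuous_gaussianPDFReal (μ : ℝ) (v : ℝ≥0) : Continuous (gaussianPDFReal μ v) := by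
  rw [gaussianPDFReal_def]
  fun_prop

lemma gaussianPDFReal_le_of_abs_le {μ : ℝ} {v : ℝ≥0} {x y : ℝ} (h : |x - μ| ≤ |y - μ|) :
    gaussianPDFReal μ v y ≤ gaussianPDFReal μ v x := by
  have hsq : (x - μ) ^ 2 ≤ (y - μ) ^ 2 := sq_le_sq.mpr h
  simp only [gaussianPDFReal]
  gcongr

lemma gaussianPDFReal_lt_of_abs_lt {μ : ℝ} {v : ℝ≥0} (hv : v ≠ 0) {x y : ℝ}
    (h : |x - μ| < |y - μ|) : gaussianPDFReal μ v y < gaussianPDFReal μ v x := by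
  have hsq : (x - μ) ^ 2 < (y - μ) ^ 2 := sq_lt_sq.mpr h
  have hv' : (0 : ℝ) < v := by positivity
  simp only [gaussianPDFReal]
  gcongr

lemma cdf_gaussianReal_eq_integral (μ : ℝ) {v : ℝ≥0} (hv : v ≠ 0) (x : ℝ) :
    cdf (gaussianReal μ v) x = ∫ t in Set.Iic x, gaussianPDFReal μ v t := by
  rw [cdf_eq_real, measureReal_def, gaussianReal_apply_eq_integral μ hv,
    ENNReal.toReal_ofReal]
  exact setIntegral_nonneg measurableSet_Iic fun t _ => gaussianPDFReal_nonneg μ v t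

lemma hasDerivAt_cdf_gaussianReal (μ : ℝ) {v : ℝ≥0} (hv : v ≠ 0) (x : ℝ) :
    HasDerivAt (cdf (gaussianReal μ v)) (gaussianPDFReal μ v x) x := by
  have hint (a : ℝ) : IntegrableOn (gaussianPDFReal μ v) (Set.Iic a) :=
    (integrable_gaussianPDFReal μ v).integrableOn
  have hcdf : ⇑(cdf (gaussianReal μ v)) =
      fun y ↦ cdf (gaussianReal μ v) x + ∫ t in x..y, gaussianPDFReal μ v t := by
    ext y
    rw [cdf_gaussianReal_eq_integral μ hv, cdf_gaussianReal_eq_integral μ hv,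
      ← intervalIntegral.integral_Iic_sub_Iic (hint x) (hint y)]
    ring
  rw [hcdf]
  exact ((continuous_gaussianPDFReal μ v).integral_hasStrictDerivAt x x).hasDerivAt.const_add _

end ProbabilityTheory

lemma hasDerivAt_stdNormalCDF (x : ℝ) : HasDerivAt stdNormalCDF (gaussianPDFReal 0 1 x) x :=
  hasDerivAt_cdf_gaussianReal 0 one_ne_zero x

lemma hasDerivAt_stdNormalCDF_comp_mul (c x : ℝ) :
    HasDerivAt (fun t ↦ stdNormalCDF (t * c)) (gaussianPDFReal 0 1 (x * c) * c) x :=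
  (hasDerivAt_stdNormalCDF (x * c)).comp x (hasDerivAt_mul_const c)

lemma hasDerivAt_phi (δ x : ℝ) :
    HasDerivAt (phi δ) (2 * gaussianPDFReal 0 1 x - gaussianPDFReal 0 1 (x * (1 + δ)) * (1 + δ)
      - gaussianPDFReal 0 1 (x * (1 - δ)) * (1 - δ)) x :=
  (((hasDerivAt_stdNormalCDF x).const_mul 2).sub (hasDerivAt_stdNormalCDF_comp_mul (1 + δ) x)).sub
    (hasDerivAt_stdNormalCDF_comp_mul (1 - δ) x)

theorem phi_strictMono_of_one_le (δ : ℝ) (hδ : 1 ≤ δ) :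
    StrictMonoOn (phi δ) (Set.Ioi (0 : ℝ)) := by
  refine strictMonoOn_of_hasDerivWithinAt_pos (convex_Ioi 0)
    (fun x _ ↦ (hasDerivAt_phi δ x).continuousAt.continuousWithinAt)
    (fun x _ ↦ (hasDerivAt_phi δ x).hasDerivWithinAt) fun x hx ↦ ?_
  rw [interior_Ioi, Set.mem_Ioi] at hx
  set g := gaussianPDFReal 0 1
  have hfar : g (x * (1 + δ)) < g x := by
    refine gaussianPDFReal_lt_of_abs_lt one_ne_zero ?_
    rw [sub_zero, sub_zero, abs_of_pos hx, abs_of_pos (by positivity)]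
    nlinarith
  have hnear : g (x * (1 + δ)) ≤ g (x * (1 - δ)) := by
    refine gaussianPDFReal_le_of_abs_le ?_
    rw [sub_zero, sub_zero, abs_of_nonpos (by nlinarith), abs_of_pos (by positivity)]
    nlinarith
  linarith [mul_le_mul_of_nonneg_left hnear (sub_nonneg.2 hδ)]
end

section
/- Under the Gaussian model setup, the generalization gap satisfies g_n ≥ 0 for every n ≥ 1. -/
open Real MeasureTheory ProbabilityTheory Filter Topology

/-- Generalization gap `g_n = W · E[⟨sign(u) − sign(u − ε·sign(u)), μ⟩]` in the Gaussian
model, where `u` has independent coordinates `u(j) ~ N(μ(j), σ(j)²/n)`. -/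
noncomputable def gaussGap (d : ℕ) (W ε : ℝ) (μ σ : Fin d → ℝ) (n : ℕ) : ℝ :=
  W * ∫ u : Fin d → ℝ,
      (∑ j, (Real.sign (u j) - Real.sign (u j - ε * Real.sign (u j))) * μ j)
    ∂(Measure.pi fun j => gaussianReal (μ j) (Real.toNNReal ((σ j) ^ 2 / n)))

/-!
Each coordinate contributes `μ j * E[s (u j)]` with `s x = sign x - sign (x - ε * sign x)`.
The function `s` is odd and nonnegative on `[0, ∞)`, so pairing `x` with `-x` gives
`2 E[s X] = ∫ s x * (p x - p (-x)) dx` for `X ~ N(m, v)` with density `p`. When `m ≥ 0`,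
`p x ≥ p (-x)` exactly for `x ≥ 0`, so this integrand is pointwise nonnegative.
-/

theorem Real.measurable_sign : Measurable Real.sign :=
  Measurable.ite (measurableSet_lt measurable_id measurable_const) measurable_const
    (Measurable.ite (measurableSet_lt measurable_const measurable_id) measurable_const
      measurable_const)

theorem Real.abs_sign_le_one (r : ℝ) : |Real.sign r| ≤ 1 := by
  rcases Real.sign_apply_eq r with h | h | h <;> simp [h]

theorem gaussianPDFReal_neg_le {m : ℝ} (hm : 0 ≤ m) (v : NNReal) {x : ℝ} (hx : 0 ≤ x) :
    gaussianPDFReal m v (-x) ≤ gaussianPDFReal m v x := by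
  have hsq : (x - m) ^ 2 ≤ (-x - m) ^ 2 := by nlinarith
  simp only [gaussianPDFReal]
  gcongr _ * rexp ?_
  exact div_le_div_of_nonneg_right (neg_le_neg hsq) (by positivity)

theorem two_mul_integral_gaussianReal_of_odd {m : ℝ} {v : NNReal} (hv : v ≠ 0) {f : ℝ → ℝ}
    (hodd : ∀ x, f (-x) = -f x) (hf : Integrable f (gaussianReal m v)) :
    2 * ∫ x, f x ∂gaussianReal m v
      = ∫ x, (gaussianPDFReal m v x - gaussianPDFReal m v (-x)) * f x := by
  rw [gaussianReal_of_var_ne_zero _ hv, integrable_withDensity_iff_integrable_smul'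
    (measurable_gaussianPDF _ _) (ae_of_all _ fun _ ↦ gaussianPDF_lt_top)] at hf
  simp only [toReal_gaussianPDF, smul_eq_mul] at hf
  have hrefl : Integrable (fun x ↦ gaussianPDFReal m v (-x) * f x) :=
    hf.comp_neg.neg.congr (ae_of_all _ fun x ↦ by simp [hodd])
  have hflip : ∫ x, gaussianPDFReal m v (-x) * f x = -∫ x, gaussianPDFReal m v x * f x := by
    rw [← integral_neg_eq_self, ← integral_neg]
    simp [hodd]
  rw [integral_gaussianReal_eq_integral_smul hv]
  simp only [sub_mul, smul_eq_mul]
  rw [integral_sub hf hrefl, hflip]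
  ring

theorem integral_gaussianReal_nonneg_of_odd {m : ℝ} (hm : 0 ≤ m) (v : NNReal) {f : ℝ → ℝ}
    (hodd : ∀ x, f (-x) = -f x) (hpos : ∀ x, 0 ≤ x → 0 ≤ f x)
    (hf : Integrable f (gaussianReal m v)) :
    0 ≤ ∫ x, f x ∂gaussianReal m v := by
  rcases eq_or_ne v 0 with rfl | hv
  · simpa [gaussianReal_zero_var] using hpos m hm
  suffices 0 ≤ 2 * ∫ x, f x ∂gaussianReal m v by linarith
  rw [two_mul_integral_gaussianReal_of_odd hv hodd hf]
  refine integral_nonneg fun x ↦ ?_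
  rcases le_total 0 x with hx | hx
  · exact mul_nonneg (sub_nonneg.2 (gaussianPDFReal_neg_le hm v hx)) (hpos x hx)
  · refine mul_nonneg_of_nonpos_of_nonpos ?_ ?_
    · simpa using gaussianPDFReal_neg_le hm v (neg_nonneg.2 hx)
    · simpa [hodd] using hpos (-x) (neg_nonneg.2 hx)

noncomputable def signGap (ε x : ℝ) : ℝ := Real.sign x - Real.sign (x - ε * Real.sign x)

theorem signGap_neg (ε x : ℝ) : signGap ε (-x) = -signGap ε x := by
  have : -x - ε * Real.sign (-x) = -(x - ε * Real.sign x) := by rw [Real.sign_neg]; ring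
  unfold signGap
  rw [this, Real.sign_neg, Real.sign_neg]
  ring

theorem signGap_nonneg (ε : ℝ) {x : ℝ} (hx : 0 ≤ x) : 0 ≤ signGap ε x := by
  rcases hx.eq_or_lt with rfl | hx
  · simp [signGap, Real.sign_zero]
  · rw [signGap, Real.sign_of_pos hx, mul_one, sub_nonneg]
    exact (abs_le.1 (Real.abs_sign_le_one (x - ε))).2

theorem measurable_signGap (ε : ℝ) : Measurable (signGap ε) :=
  Real.measurable_sign.sub
    (Real.measurable_sign.comp (measurable_id.sub (Real.measurable_sign.const_mul ε)))

theorem abs_signGap_le_two (ε x : ℝ) : |signGap ε x| ≤ 2 :=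
  (abs_sub _ _).trans <| by
    linarith [Real.abs_sign_le_one x, Real.abs_sign_le_one (x - ε * Real.sign x)]

theorem integrable_signGap (ε : ℝ) (ν : Measure ℝ) [IsFiniteMeasure ν] :
    Integrable (signGap ε) ν :=
  .of_bound (measurable_signGap ε).aestronglyMeasurable 2 (ae_of_all _ (abs_signGap_le_two ε))

theorem gaussGap_nonneg_general (d : ℕ) (W ε : ℝ) (μ σ : Fin d → ℝ)
    (hW : 0 < W) (hμ : ∀ j, 0 ≤ μ j)
    (n : ℕ) :
    0 ≤ gaussGap d W ε μ σ n := by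
  change 0 ≤ W * ∫ u, ∑ j, signGap ε (u j) * μ j
    ∂Measure.pi fun j ↦ gaussianReal (μ j) (Real.toNNReal ((σ j) ^ 2 / n))
  refine mul_nonneg hW.le ?_
  rw [integral_finsetSum (f := fun j (u : Fin d → ℝ) ↦ signGap ε (u j) * μ j) _
    fun j _ ↦ integrable_comp_eval (X := fun _ ↦ ℝ) (i := j)
      ((integrable_signGap ε _).mul_const _)]
  refine Finset.sum_nonneg fun j _ ↦ ?_
  rw [integral_comp_eval (X := fun _ ↦ ℝ) (f := fun x ↦ signGap ε x * μ j)
    ((measurable_signGap ε).mul_const _).aestronglyMeasurable, integral_mul_const]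
  exact mul_nonneg (integral_gaussianReal_nonneg_of_odd (hμ j) _ (signGap_neg ε)
    (fun _ ↦ signGap_nonneg ε) (integrable_signGap ε _)) (hμ j)

theorem gaussGap_nonneg (d : ℕ) (W ε : ℝ) (μ σ : Fin d → ℝ)
    (hW : 0 < W) (hε : 0 < ε) (hμ : ∀ j, 0 ≤ μ j) (hσ : ∀ j, 0 < σ j)
    (n : ℕ) (hn : 1 ≤ n) :
    0 ≤ gaussGap d W ε μ σ n :=
  gaussGap_nonneg_general d W ε μ σ hW hμ n
end
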